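/- arXiv:2105.07424 — 2 statements merged into one kernel-verified Lean document; each statement's English description precedes it below -/
import Mathlib

section
/- Let B and A be m×l and l×n real matrices, p = max{m,n,l}, q = min{m,n,l}. Then for each k = 1,…,q, the k-th largest singular value of the product satisfies σ_k(BA) ≤ min_{1 ≤ i ≤ k} σ_i(B) σ_{k+1−i}(A). -/
/-!
Pick a nonzero `x ∈ ℝⁿ` in the span of the right singular vectors of `BA` belonging to its `k`
largest singular values, orthogonal to those of `A` belonging to its `k - i` largest, and with `Ax`
orthogonal to those of `B` belonging to its `i - 1` largest. These are
`(n - k) + (k - i) + (i - 1) = n - 1` linear conditions, so such an `x` exists, and for it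
`σ_k(BA) ‖x‖ ≤ ‖BAx‖ ≤ σ_i(B) ‖Ax‖ ≤ σ_i(B) σ_{k+1-i}(A) ‖x‖`.
-/

open Matrix

/-- the k-th largest element of a finite tuple (k is 1-based) -/
noncomputable def kthLargest {n : ℕ} (f : Fin n → ℝ) (k : Fin n) : ℝ :=
  (f ∘ Tuple.sort f) (Fin.rev k)

/-- the k-th largest singular value of a real matrix (1-based indexing;
returns 0 for out-of-range k), defined via the eigenvalues of `Mᴴ * M`. -/
noncomputable def singVal {m n : ℕ} (M : Matrix (Fin m) (Fin n) ℝ) (k : ℕ) : ℝ :=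
  if h : k - 1 < n then
    Real.sqrt (kthLargest (show (Mᵀ * M).IsHermitian by
      have h := Matrix.isHermitian_conjTranspose_mul_self M
      rwa [Matrix.conjTranspose_eq_transpose_of_trivial] at h).eigenvalues ⟨k - 1, h⟩)
  else 0

open Finset

section WeightedSum

variable {ι : Type*} [Fintype ι] [LinearOrder ι] {g c : ι → ℝ} {t : ι}

lemma sum_mul_le_mul_sum_of_forall_gt (hg : Monotone g) (hc : ∀ j, 0 ≤ c j)
    (ht : ∀ j, t < j → c j = 0) : ∑ j, g j * c j ≤ g t * ∑ j, c j := by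
  rw [mul_sum]
  refine sum_le_sum fun j _ => ?_
  rcases le_or_gt j t with hjt | htj
  · exact mul_le_mul_of_nonneg_right (hg hjt) (hc j)
  · simp [ht j htj]

lemma mul_sum_le_sum_mul_of_forall_lt (hg : Monotone g) (hc : ∀ j, 0 ≤ c j)
    (ht : ∀ j, j < t → c j = 0) : g t * ∑ j, c j ≤ ∑ j, g j * c j := by
  rw [mul_sum]
  refine sum_le_sum fun j _ => ?_
  rcases le_or_gt t j with htj | hjt
  · exact mul_le_mul_of_nonneg_right (hg htj) (hc j)
  · simp [ht j hjt]

end WeightedSum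

namespace Matrix

lemma exists_ne_zero_forall_dotProduct_eq_zero {K ι : Type*} [Field K] [Fintype ι]
    (s : Finset (ι → K)) (hs : #s < Fintype.card ι) :
    ∃ x ≠ 0, ∀ u ∈ s, u ⬝ᵥ x = 0 := by
  have hker : LinearMap.ker (mulVecLin (of fun (u : s) => (u : ι → K))) ≠ ⊥ :=
    LinearMap.ker_ne_bot_of_finrank_lt (by simpa [Module.finrank_fintype_fun_eq_card] using hs)
  obtain ⟨x, hx, hx0⟩ := Submodule.exists_mem_ne_zero_of_ne_bot hker
  exact ⟨x, hx0, fun u hu => congrFun (LinearMap.mem_ker.mp hx) ⟨u, hu⟩⟩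

lemma isHermitian_transpose_mul_self {R m n : Type*} [Fintype m] [CommRing R] [StarRing R]
    [TrivialStar R] (M : Matrix m n R) : (Mᵀ * M).IsHermitian := by
  simpa only [conjTranspose_eq_transpose_of_trivial] using isHermitian_conjTranspose_mul_self M

variable {a b : ℕ} (M : Matrix (Fin a) (Fin b) ℝ)

/-- Sorted increasingly, so `singVal M t` is the square root of the entry with index `b - t`. -/
noncomputable def gramEigenvalues : Fin b → ℝ :=
  M.isHermitian_transpose_mul_self.eigenvalues ∘
    Tuple.sort M.isHermitian_transpose_mul_self.eigenvalues

noncomputable def gramEigenvectors (j : Fin b) : Fin b → ℝ :=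
  M.isHermitian_transpose_mul_self.eigenvectorBasis
    (Tuple.sort M.isHermitian_transpose_mul_self.eigenvalues j)

lemma gramEigenvalues_monotone : Monotone M.gramEigenvalues :=
  Tuple.monotone_sort _

lemma gramEigenvalues_nonneg (j : Fin b) : 0 ≤ M.gramEigenvalues j := by
  have hM := posSemidef_conjTranspose_mul_self M
  rw [conjTranspose_eq_transpose_of_trivial] at hM
  exact hM.eigenvalues_nonneg _

lemma singVal_eq_sqrt_gramEigenvalues {t : ℕ} (ht : 1 ≤ t) (htb : t ≤ b) :
    singVal M t = √(M.gramEigenvalues ⟨b - t, by omega⟩) := by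
  rw [singVal, dif_pos (by omega)]
  unfold kthLargest gramEigenvalues
  congr 2
  ext
  simp only [Fin.val_rev]
  omega

lemma sum_sq_gramEigenvectors_dotProduct (x : Fin b → ℝ) :
    ∑ j, (M.gramEigenvectors j ⬝ᵥ x) ^ 2 = x ⬝ᵥ x := by
  set E := M.isHermitian_transpose_mul_self.eigenvectorBasis
  calc ∑ j, (M.gramEigenvectors j ⬝ᵥ x) ^ 2
      = ∑ i, inner ℝ (E i) (WithLp.toLp 2 x) ^ 2 := by
        simp only [EuclideanSpace.inner_eq_star_dotProduct, star_trivial, dotProduct_comm x]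
        exact Equiv.sum_comp _ fun i => (E i ⬝ᵥ x) ^ 2
    _ = ‖WithLp.toLp 2 x‖ ^ 2 := E.sum_sq_inner_right _
    _ = x ⬝ᵥ x := by rw [EuclideanSpace.real_norm_sq_eq]; simp [dotProduct, sq]

lemma gramEigenvectors_dotProduct_mulVec (j : Fin b) (x : Fin b → ℝ) :
    M.gramEigenvectors j ⬝ᵥ ((Mᵀ * M) *ᵥ x) =
      M.gramEigenvalues j * (M.gramEigenvectors j ⬝ᵥ x) := by
  have hM := M.isHermitian_transpose_mul_self
  rw [dotProduct_mulVec, ← mulVec_transpose, ← conjTranspose_eq_transpose_of_trivial, hM.eq,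
    gramEigenvectors, hM.mulVec_eigenvectorBasis, smul_dotProduct, smul_eq_mul]
  rfl

lemma mulVec_dotProduct_mulVec_self (x : Fin b → ℝ) :
    M *ᵥ x ⬝ᵥ M *ᵥ x = ∑ j, M.gramEigenvalues j * (M.gramEigenvectors j ⬝ᵥ x) ^ 2 := by
  set E := M.isHermitian_transpose_mul_self.eigenvectorBasis
  calc M *ᵥ x ⬝ᵥ M *ᵥ x = inner ℝ (WithLp.toLp 2 x) (WithLp.toLp 2 ((Mᵀ * M) *ᵥ x)) := by
        rw [EuclideanSpace.inner_toLp_toLp, star_trivial, ← mulVec_mulVec, mulVec_transpose,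
          ← dotProduct_mulVec]
    _ = ∑ i, inner ℝ (WithLp.toLp 2 x) (E i) * inner ℝ (E i) (WithLp.toLp 2 ((Mᵀ * M) *ᵥ x)) :=
        (E.sum_inner_mul_inner _ _).symm
    _ = _ := by
        simp only [EuclideanSpace.inner_eq_star_dotProduct, star_trivial]
        rw [← Equiv.sum_comp (Tuple.sort M.isHermitian_transpose_mul_self.eigenvalues)]
        refine sum_congr rfl fun j _ => ?_
        rw [dotProduct_comm ((Mᵀ * M) *ᵥ x)]
        change M.gramEigenvectors j ⬝ᵥ x * (M.gramEigenvectors j ⬝ᵥ ((Mᵀ * M) *ᵥ x)) = _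
        rw [gramEigenvectors_dotProduct_mulVec]
        ring

lemma mulVec_dotProduct_mulVec_self_le {x : Fin b → ℝ} {t : Fin b}
    (ht : ∀ j, t < j → M.gramEigenvectors j ⬝ᵥ x = 0) :
    M *ᵥ x ⬝ᵥ M *ᵥ x ≤ M.gramEigenvalues t * (x ⬝ᵥ x) := by
  rw [mulVec_dotProduct_mulVec_self, ← sum_sq_gramEigenvectors_dotProduct M x]
  exact sum_mul_le_mul_sum_of_forall_gt M.gramEigenvalues_monotone (fun _ => sq_nonneg _)
    fun j hj => by rw [ht j hj, sq, zero_mul]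

lemma le_mulVec_dotProduct_mulVec_self {x : Fin b → ℝ} {t : Fin b}
    (ht : ∀ j, j < t → M.gramEigenvectors j ⬝ᵥ x = 0) :
    M.gramEigenvalues t * (x ⬝ᵥ x) ≤ M *ᵥ x ⬝ᵥ M *ᵥ x := by
  rw [mulVec_dotProduct_mulVec_self, ← sum_sq_gramEigenvectors_dotProduct M x]
  exact mul_sum_le_sum_mul_of_forall_lt M.gramEigenvalues_monotone (fun _ => sq_nonneg _)
    fun j hj => by rw [ht j hj, sq, zero_mul]

/-- In the decreasing 1-based indices `k = n - tP`, `i = l - tB`, `j = n - tA` of singular values,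
the hypothesis reads `i + j ≤ k + 1`. -/
theorem gramEigenvalues_mul_le {m l n : ℕ} (B : Matrix (Fin m) (Fin l) ℝ)
    (A : Matrix (Fin l) (Fin n) ℝ) {tP tA : Fin n} {tB : Fin l}
    (ht : (tP : ℕ) + l ≤ tA + tB + 1) :
    (B * A).gramEigenvalues tP ≤ B.gramEigenvalues tB * A.gramEigenvalues tA := by
  obtain ⟨x, hx0, hx⟩ := exists_ne_zero_forall_dotProduct_eq_zero
    ((Iio tP).image (B * A).gramEigenvectors ∪ (Ioi tA).image A.gramEigenvectors ∪
      (Ioi tB).image fun j => B.gramEigenvectors j ᵥ* A) <| by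
    grw [card_union_le, card_union_le, card_image_le, card_image_le, card_image_le]
    simp only [Fin.card_Iio, Fin.card_Ioi, Fintype.card_fin]
    omega
  have hP : (B * A).gramEigenvalues tP * (x ⬝ᵥ x) ≤ (B * A) *ᵥ x ⬝ᵥ (B * A) *ᵥ x :=
    le_mulVec_dotProduct_mulVec_self _ fun j hj =>
      hx _ (mem_union_left _ (mem_union_left _ (mem_image_of_mem _ (mem_Iio.2 hj))))
  have hB : (B * A) *ᵥ x ⬝ᵥ (B * A) *ᵥ x ≤ B.gramEigenvalues tB * (A *ᵥ x ⬝ᵥ A *ᵥ x) := by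
    rw [← mulVec_mulVec]
    exact mulVec_dotProduct_mulVec_self_le _ fun j hj => by
      rw [dotProduct_mulVec]
      exact hx _ (mem_union_right _ (mem_image_of_mem _ (mem_Ioi.2 hj)))
  have hA : A *ᵥ x ⬝ᵥ A *ᵥ x ≤ A.gramEigenvalues tA * (x ⬝ᵥ x) :=
    mulVec_dotProduct_mulVec_self_le _ fun j hj =>
      hx _ (mem_union_left _ (mem_union_right _ (mem_image_of_mem _ (mem_Ioi.2 hj))))
  have hx_pos : 0 < x ⬝ᵥ x := by
    simpa only [star_trivial] using dotProduct_self_star_pos_iff.mpr hx0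
  refine le_of_mul_le_mul_right ?_ hx_pos
  calc _ ≤ _ := hP.trans hB
    _ ≤ _ := mul_le_mul_of_nonneg_left hA (B.gramEigenvalues_nonneg tB)
    _ = _ := by ring

end Matrix

theorem stmt11 {m l n : ℕ} (B : Matrix (Fin m) (Fin l) ℝ) (A : Matrix (Fin l) (Fin n) ℝ)
    (q : ℕ) (hq : q = min m (min n l)) :
    ∀ k, 1 ≤ k → k ≤ q → ∀ i, 1 ≤ i → i ≤ k →
      singVal (B * A) k ≤ singVal B i * singVal A (k + 1 - i) := by
  intro k hk hkq i hi hik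
  have hkn : k ≤ n := by omega
  have hkl : k ≤ l := by omega
  rw [singVal_eq_sqrt_gramEigenvalues _ hk hkn, singVal_eq_sqrt_gramEigenvalues _ hi (by omega),
    singVal_eq_sqrt_gramEigenvalues _ (by omega) (by omega),
    ← Real.sqrt_mul (B.gramEigenvalues_nonneg _)]
  exact Real.sqrt_le_sqrt (gramEigenvalues_mul_le B A (by simp only; omega))
end

section
/- Let m(θ) = Aθ + b with A ∈ ℝ^{q×K} and suppose there is a restricted lower bound: for a sparsity level s and cone constant u ≥ 0, min over index sets |I| ≤ s and θ ∈ C_I(u) with |θ|_a = 1 of |Aθ|_∞ ≥ κ, where C_I(u) = {θ : |θ_{I^c}|₁ ≤ u|θ_I|₁} and a ∈ {1,2}. Let Â be a perturbation with |Â − A|_max ≤ b_n. Then for all θ ∈ C_I(u) with |θ|_a = 1 and |I| ≤ s: |Âθ|_∞ ≥ κ − b_n · ((1+u) s^{1−1/a}), using |θ|₁/|θ|_a ≤ (1+u) s^{1−1/a} for θ in the cone (equal to 1 when a=1 and at most (1+u)√s when a=2). -/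
open Matrix BigOperators

/-!
On the cone `|θ_{Iᶜ}|₁ ≤ u |θ_I|₁` one has `|θ|₁ ≤ (1 + u) |θ_I|₁`, and `|θ_I|₁ ≤ √s |θ|₂` by
Cauchy–Schwarz on the `s` coordinates of `I`; so a unit vector in the `ℓ¹` or `ℓ²` norm has
`|θ|₁ ≤ (1 + u) s ^ (1 - 1/a)`. Since `|(Â - A) θ|_∞ ≤ |Â - A|_max |θ|₁`, the reverse triangle
inequality transfers the restricted lower bound from `A` to `Â` at this cost.
-/

section Cone

variable {ι : Type*} [Fintype ι]

theorem sum_abs_le_one_add_mul_of_cone [DecidableEq ι] {I : Finset ι} {θ : ι → ℝ} {u : ℝ}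
    (hcone : ∑ j ∈ Iᶜ, |θ j| ≤ u * ∑ j ∈ I, |θ j|) :
    ∑ j, |θ j| ≤ (1 + u) * ∑ j ∈ I, |θ j| := by
  rw [← Finset.sum_add_sum_compl I]
  linarith

theorem sum_abs_le_sqrt_of_sum_sq_le_one {I : Finset ι} {θ : ι → ℝ} {s : ℕ}
    (hI : I.card ≤ s) (hθ : ∑ j, |θ j| ^ 2 ≤ 1) :
    ∑ j ∈ I, |θ j| ≤ √(s : ℝ) := by
  refine Real.le_sqrt_of_sq_le ?_
  calc (∑ j ∈ I, |θ j|) ^ 2 ≤ I.card * ∑ j ∈ I, |θ j| ^ 2 := sq_sum_le_card_mul_sum_sq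
    _ ≤ s * 1 := mul_le_mul (by exact_mod_cast hI)
      ((Finset.sum_le_univ_sum_of_nonneg fun j => sq_nonneg _).trans hθ) (by positivity) (by positivity)
    _ = s := mul_one _

theorem sum_rpow_eq_one_of_rpow_norm_eq_one {θ : ι → ℝ} {p : ℝ} (hp : p ≠ 0)
    (hθ : (∑ j, |θ j| ^ p) ^ (1 / p) = 1) :
    ∑ j, |θ j| ^ p = 1 := by
  rwa [one_div, Real.rpow_inv_eq (by positivity) zero_le_one hp, Real.one_rpow] at hθ

theorem sum_abs_le_of_cone_of_norm_eq_one [DecidableEq ι] {I : Finset ι} {θ : ι → ℝ} {u : ℝ}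
    (hu : 0 ≤ u) {s a : ℕ} (ha : a = 1 ∨ a = 2) (hI : I.card ≤ s)
    (hcone : ∑ j ∈ Iᶜ, |θ j| ≤ u * ∑ j ∈ I, |θ j|)
    (hθ : (∑ j, |θ j| ^ (a : ℝ)) ^ (1 / (a : ℝ)) = 1) :
    ∑ j, |θ j| ≤ (1 + u) * (s : ℝ) ^ (1 - 1 / (a : ℝ)) := by
  have hsum := sum_rpow_eq_one_of_rpow_norm_eq_one (by rcases ha with rfl | rfl <;> norm_num) hθ
  rcases ha with rfl | rfl
  · norm_num at hsum ⊢
    linarith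
  · have hsq : ∑ j, |θ j| ^ 2 ≤ 1 := by exact_mod_cast hsum.le
    have h_half : (1 : ℝ) - 1 / ((2 : ℕ) : ℝ) = 1 / 2 := by norm_num
    rw [h_half, ← Real.sqrt_eq_rpow]
    calc ∑ j, |θ j| ≤ (1 + u) * ∑ j ∈ I, |θ j| := sum_abs_le_one_add_mul_of_cone hcone
      _ ≤ (1 + u) * √(s : ℝ) := by gcongr; exact sum_abs_le_sqrt_of_sum_sq_le_one hI hsq

end Cone

section Perturbation

variable {m n : Type*} [Fintype n]

theorem abs_mulVec_sub_mulVec_le {A B : Matrix m n ℝ} {c : ℝ} (hAB : ∀ i j, |B i j - A i j| ≤ c)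
    (θ : n → ℝ) (i : m) :
    |(A *ᵥ θ) i - (B *ᵥ θ) i| ≤ c * ∑ j, |θ j| := by
  rw [← Pi.sub_apply, ← sub_mulVec, mulVec, dotProduct, Finset.mul_sum]
  refine (Finset.abs_sum_le_sum_abs _ _).trans (Finset.sum_le_sum fun j _ => ?_)
  rw [abs_mul, Matrix.sub_apply, abs_sub_comm]
  exact mul_le_mul_of_nonneg_right (hAB i j) (abs_nonneg _)

theorem iSup_abs_mulVec_le_add [Finite m] {A B : Matrix m n ℝ} {c : ℝ} (hc : 0 ≤ c)
    (hAB : ∀ i j, |B i j - A i j| ≤ c) (θ : n → ℝ) :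
    ⨆ i, |(A *ᵥ θ) i| ≤ (⨆ i, |(B *ᵥ θ) i|) + c * ∑ j, |θ j| := by
  have hB : 0 ≤ ⨆ i, |(B *ᵥ θ) i| := Real.iSup_nonneg fun i => abs_nonneg _
  refine Real.iSup_le (fun i => ?_) (add_nonneg hB (by positivity))
  calc |(A *ᵥ θ) i| ≤ |(B *ᵥ θ) i| + |(A *ᵥ θ) i - (B *ᵥ θ) i| :=
      sub_le_iff_le_add'.mp (abs_sub_abs_le_abs_sub _ _)
    _ ≤ (⨆ i, |(B *ᵥ θ) i|) + c * ∑ j, |θ j| :=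
      add_le_add (le_ciSup (Set.finite_range fun i => |(B *ᵥ θ) i|).bddAbove i)
        (abs_mulVec_sub_mulVec_le hAB θ i)

end Perturbation

theorem stmt19_general {q K : ℕ} (A Ahat : Matrix (Fin q) (Fin K) ℝ)
    (s : ℕ) (u : ℝ) (hu : 0 ≤ u) (a : ℕ) (ha : a = 1 ∨ a = 2)
    (κ bn : ℝ) (hbn : 0 ≤ bn)
    -- restricted lower bound on the cone for the true matrix A
    (hκ : ∀ (I : Finset (Fin K)) (θ : Fin K → ℝ), I.card ≤ s →
      (∑ j ∈ Iᶜ, |θ j|) ≤ u * (∑ j ∈ I, |θ j|) →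
      (∑ j, |θ j| ^ (a : ℝ)) ^ (1 / (a : ℝ)) = 1 →
      κ ≤ ⨆ i, |(A *ᵥ θ) i|)
    -- entrywise perturbation bound
    (hpert : ∀ i j, |Ahat i j - A i j| ≤ bn) :
    ∀ (I : Finset (Fin K)) (θ : Fin K → ℝ), I.card ≤ s →
      (∑ j ∈ Iᶜ, |θ j|) ≤ u * (∑ j ∈ I, |θ j|) →
      (∑ j, |θ j| ^ (a : ℝ)) ^ (1 / (a : ℝ)) = 1 →
      κ - bn * ((1 + u) * (s : ℝ) ^ (1 - 1 / (a : ℝ))) ≤ ⨆ i, |(Ahat *ᵥ θ) i| := by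
  intro I θ hI hcone hθ
  have hA := hκ I θ hI hcone hθ
  have hAhat := iSup_abs_mulVec_le_add hbn hpert θ
  have hl1 := mul_le_mul_of_nonneg_left
    (sum_abs_le_of_cone_of_norm_eq_one hu ha hI hcone hθ) hbn
  linarith

theorem stmt19 {q K : ℕ} (A Ahat : Matrix (Fin q) (Fin K) ℝ)
    (b : Fin q → ℝ) (mmap : (Fin K → ℝ) → (Fin q → ℝ)) (hm : ∀ θ, mmap θ = A *ᵥ θ + b)
    (s : ℕ) (u : ℝ) (hu : 0 ≤ u) (a : ℕ) (ha : a = 1 ∨ a = 2)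
    (κ bn : ℝ) (hbn : 0 ≤ bn)
    -- restricted lower bound on the cone for the true matrix A
    (hκ : ∀ (I : Finset (Fin K)) (θ : Fin K → ℝ), I.card ≤ s →
      (∑ j ∈ Iᶜ, |θ j|) ≤ u * (∑ j ∈ I, |θ j|) →
      (∑ j, |θ j| ^ (a : ℝ)) ^ (1 / (a : ℝ)) = 1 →
      κ ≤ ⨆ i, |(A *ᵥ θ) i|)
    -- entrywise perturbation bound
    (hpert : ∀ i j, |Ahat i j - A i j| ≤ bn) :
    ∀ (I : Finset (Fin K)) (θ : Fin K → ℝ), I.card ≤ s →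
      (∑ j ∈ Iᶜ, |θ j|) ≤ u * (∑ j ∈ I, |θ j|) →
      (∑ j, |θ j| ^ (a : ℝ)) ^ (1 / (a : ℝ)) = 1 →
      κ - bn * ((1 + u) * (s : ℝ) ^ (1 - 1 / (a : ℝ))) ≤ ⨆ i, |(Ahat *ᵥ θ) i| :=
  stmt19_general A Ahat s u hu a ha κ bn hbn hκ hpert
end
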